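/- For any smooth compactly supported function W : (0,∞) → ℝ, any natural number m ≥ 1, and any real n > 0, the integral ∫₀^∞ W(u) · 2π√u · J₁(4π√(un)) du is bounded in absolute value by C·n^(−m/2), where C depends only on m and W, and J₁ is the Bessel function of the first kind of order 1. -/

import Mathlib

open Real MeasureTheory

/-- The Bessel function of the first kind of integer order `ν`. -/
noncomputable def besselJ (ν : ℕ) (t : ℝ) : ℝ :=
  ∑' k : ℕ, (-1 : ℝ) ^ k / (Nat.factorial k * Nat.factorial (k + ν)) * (t / 2) ^ (2 * k + ν)

namespace BesselAux

noncomputable def bco (ν k : ℕ) : ℝ := (-1 : ℝ) ^ k / (Nat.factorial k * Nat.factorial (k + ν))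

noncomputable def bterm (ν k : ℕ) (t : ℝ) : ℝ := bco ν k * (t / 2) ^ (2 * k + ν)

noncomputable def bterm' (ν k : ℕ) (t : ℝ) : ℝ :=
  bco ν k * ((2 * k + ν) * (t / 2) ^ (2 * k + ν - 1) / 2)

lemma besselJ_eq (ν : ℕ) (t : ℝ) : besselJ ν t = ∑' k, bterm ν k t := rfl

lemma abs_bco_le (ν k : ℕ) : |bco ν k| ≤ 1 / Nat.factorial k := by
  have h1 : (1:ℝ) ≤ Nat.factorial (k + ν) := by exact_mod_cast Nat.one_le_iff_ne_zero.mpr (Nat.factorial_ne_zero _)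
  have h0 : (0:ℝ) < Nat.factorial k := by exact_mod_cast Nat.factorial_pos k
  rw [bco, abs_div, abs_pow, abs_neg, abs_one, one_pow, abs_mul, Nat.abs_cast, Nat.abs_cast]
  rw [div_le_div_iff₀ (by positivity) h0]
  nlinarith

lemma le_geom (ν : ℕ) : ∀ k : ℕ, (2 * k + ν + 1 : ℝ) ≤ (ν + 3) * 2 ^ k := by
  intro k
  induction k with
  | zero => norm_num
  | succ k ih =>
    have h2 : (1:ℝ) ≤ 2 ^ k := one_le_pow₀ (by norm_num)
    push_cast at ih ⊢
    have : ((ν:ℝ) + 3) * 2 ^ (k+1) = (ν + 3) * 2 ^ k + (ν + 3) * 2 ^ k := by ring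
    nlinarith

/-- master summable bound -/
lemma summable_master (ν : ℕ) (R : ℝ) (hR : 1 ≤ R) :
    Summable (fun k : ℕ => (2 * k + ν + 1 : ℝ) * R ^ (2 * k + ν) / Nat.factorial k) := by
  have h := (Real.summable_pow_div_factorial (2 * R ^ 2)).mul_left ((ν + 3 : ℝ) * R ^ ν)
  refine Summable.of_nonneg_of_le (fun k => by positivity) (fun k => ?_) h
  have hRpos : (0:ℝ) < R := lt_of_lt_of_le one_pos hR
  have h1 : R ^ (2 * k + ν) = R ^ ν * (R ^ 2) ^ k := by rw [← pow_mul, ← pow_add]; ring_nf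
  have h2 : (2 * k + ν + 1 : ℝ) ≤ (ν + 3) * 2 ^ k := le_geom ν k
  have hf : (0:ℝ) < Nat.factorial k := by exact_mod_cast Nat.factorial_pos k
  rw [h1, ← mul_div_assoc]
  have key : (2 * (k:ℝ) + ν + 1) * (R ^ ν * (R ^ 2) ^ k) ≤ (ν + 3 : ℝ) * R ^ ν * (2 * R ^ 2) ^ k := by
    rw [mul_pow]
    have hnn : (0:ℝ) ≤ R ^ ν * (R^2)^k := by positivity
    nlinarith [mul_le_mul_of_nonneg_right h2 hnn]
  gcongr

lemma abs_bterm_le (ν k : ℕ) {t R : ℝ} (hR : 1 ≤ R) (ht : |t| ≤ R) :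
    |bterm ν k t| ≤ (2 * k + ν + 1 : ℝ) * R ^ (2 * k + ν) / Nat.factorial k := by
  have h1 : |(t/2) ^ (2*k+ν)| ≤ R ^ (2*k+ν) := by
    rw [abs_pow]
    apply pow_le_pow_left₀ (abs_nonneg _)
    rw [abs_div]
    calc |t| / |(2:ℝ)| ≤ |t| := by rw [abs_two]; linarith [abs_nonneg t]
    _ ≤ R := ht
  have h2 := abs_bco_le ν k
  have hf : (0:ℝ) < Nat.factorial k := by exact_mod_cast Nat.factorial_pos k
  rw [bterm, abs_mul]
  calc |bco ν k| * |(t/2)^(2*k+ν)| ≤ (1 / Nat.factorial k) * R ^ (2*k+ν) := by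
        apply mul_le_mul h2 h1 (abs_nonneg _) (by positivity)
    _ = R ^ (2*k+ν) / Nat.factorial k := by ring
    _ ≤ (2 * k + ν + 1 : ℝ) * R ^ (2 * k + ν) / Nat.factorial k := by
        gcongr
        have hRp : (0:ℝ) ≤ R ^ (2*k+ν) := by positivity
        nlinarith

lemma abs_bterm'_le (ν k : ℕ) {t R : ℝ} (hR : 1 ≤ R) (ht : |t| ≤ R) :
    |bterm' ν k t| ≤ (2 * k + ν + 1 : ℝ) * R ^ (2 * k + ν) / Nat.factorial k := by
  have hRpos : (0:ℝ) < R := lt_of_lt_of_le one_pos hR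
  have h1 : |(t/2) ^ (2*k+ν-1)| ≤ R ^ (2*k+ν) := by
    rw [abs_pow]
    calc |t/2| ^ (2*k+ν-1) ≤ R ^ (2*k+ν-1) := by
          apply pow_le_pow_left₀ (abs_nonneg _)
          rw [abs_div, abs_two]
          linarith [abs_nonneg t]
      _ ≤ R ^ (2*k+ν) := pow_le_pow_right₀ hR (Nat.sub_le _ _)
  have h2 := abs_bco_le ν k
  have hf : (0:ℝ) < Nat.factorial k := by exact_mod_cast Nat.factorial_pos k
  rw [bterm', abs_mul]
  have h3 : |(2 * (k:ℝ) + ν) * (t/2) ^ (2*k+ν-1) / 2| ≤ (2*k+ν+1 : ℝ) * R ^ (2*k+ν) := by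
    rw [abs_div, abs_mul, abs_two]
    have hcnn : (0:ℝ) ≤ 2 * (k:ℝ) + ν := by positivity
    rw [abs_of_nonneg hcnn]
    have hc : (2 * (k:ℝ) + ν) ≤ (2*k+ν+1 : ℝ) := by linarith
    have hmm := mul_le_mul hc h1 (abs_nonneg _) (by positivity)
    calc (2*(k:ℝ)+ν) * |(t/2)^(2*k+ν-1)| / 2 ≤ (2*(k:ℝ)+ν) * |(t/2)^(2*k+ν-1)| := by
          linarith [mul_nonneg hcnn (abs_nonneg ((t/2)^(2*k+ν-1)))]
      _ ≤ (2*k+ν+1 : ℝ) * R ^ (2*k+ν) := hmm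
  calc |bco ν k| * |(2 * (k:ℝ) + ν) * (t/2)^(2*k+ν-1) / 2|
      ≤ (1 / Nat.factorial k) * ((2*k+ν+1:ℝ) * R ^ (2*k+ν)) := by
        apply mul_le_mul h2 h3 (abs_nonneg _) (by positivity)
    _ = (2*k+ν+1 : ℝ) * R ^ (2*k+ν) / Nat.factorial k := by ring

lemma summable_bterm (ν : ℕ) (t : ℝ) : Summable (fun k => bterm ν k t) := by
  have hR : (1:ℝ) ≤ |t| + 1 := by linarith [abs_nonneg t]
  exact (summable_master ν (|t|+1) hR).of_norm_bounded
    (fun k => abs_bterm_le ν k hR (by linarith))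

lemma summable_bterm' (ν : ℕ) (t : ℝ) : Summable (fun k => bterm' ν k t) := by
  have hR : (1:ℝ) ≤ |t| + 1 := by linarith [abs_nonneg t]
  exact (summable_master ν (|t|+1) hR).of_norm_bounded
    (fun k => abs_bterm'_le ν k hR (by linarith))

lemma bterm_hasDerivAt (ν k : ℕ) (t : ℝ) : HasDerivAt (bterm ν k) (bterm' ν k t) t := by
  have h : HasDerivAt (fun t : ℝ => (t/2) ^ (2*k+ν))
      (((2*k+ν : ℕ) : ℝ) * (t/2) ^ (2*k+ν-1) * (1/2)) t := by
    have h1 : HasDerivAt (fun t : ℝ => t/2) (1/2) t := (hasDerivAt_id t).div_const 2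
    exact HasDerivAt.comp t (hasDerivAt_pow (2*k+ν) (t/2)) h1
  have h2 := h.const_mul (bco ν k)
  have hfun : bterm ν k = fun t : ℝ => bco ν k * (t/2) ^ (2*k+ν) := rfl
  rw [hfun]
  refine h2.congr_deriv ?_; symm
  rw [bterm']
  push_cast
  ring

lemma besselJ_hasDerivAt (ν : ℕ) (t : ℝ) :
    HasDerivAt (besselJ ν) (∑' k, bterm' ν k t) t := by
  set R := |t| + 1 with hRdef
  have hR1 : (1:ℝ) ≤ R := by simp [hRdef]
  have hfun : besselJ ν = fun z : ℝ => ∑' k, bterm ν k z := rfl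
  rw [hfun]
  have h0R : (0:ℝ) < R := by linarith [abs_nonneg t]
  refine hasDerivAt_tsum_of_isPreconnected (summable_master ν R hR1)
    (isOpen_Ioo (a := -R) (b := R)) (convex_Ioo _ _).isPreconnected
    (fun k y _ => bterm_hasDerivAt ν k y)
    (fun k y hy => ?_) (show (0:ℝ) ∈ Set.Ioo (-R) R from ⟨by linarith, h0R⟩)
    (summable_bterm ν 0)
    (show t ∈ Set.Ioo (-R) R from ⟨by linarith [neg_abs_le t], by linarith [le_abs_self t]⟩)
  · have hy' : |y| ≤ R := by
      rw [abs_le]; exact ⟨hy.1.le, hy.2.le⟩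
    rw [Real.norm_eq_abs]
    exact abs_bterm'_le ν k hR1 hy'

end BesselAux

namespace BesselAux

lemma bco_succ (k : ℕ) : bco 0 (k+1) * ((k:ℝ)+1) = -bco 1 k := by
  have h1 : (((k+1).factorial : ℕ) : ℝ) = ((k:ℝ)+1) * k.factorial := by
    rw [Nat.factorial_succ]; push_cast; ring
  have hk : ((k.factorial : ℕ):ℝ) ≠ 0 := by
    exact_mod_cast (Nat.factorial_pos k).ne'
  have hk1 : ((k:ℝ)+1) ≠ 0 := by positivity
  rw [bco, bco]
  show (-1:ℝ)^(k+1) / ((k+1).factorial * (k+1+0).factorial) * ((k:ℝ)+1)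
      = -((-1:ℝ)^k / (k.factorial * (k+1).factorial))
  have e : k+1+0 = k+1 := rfl
  rw [e, h1]
  field_simp
  ring

lemma bco01 (k : ℕ) : bco 0 k = ((k:ℝ)+1) * bco 1 k := by
  have h1 : (((k+1).factorial : ℕ) : ℝ) = ((k:ℝ)+1) * k.factorial := by
    rw [Nat.factorial_succ]; push_cast; ring
  have hk : ((k.factorial : ℕ):ℝ) ≠ 0 := by exact_mod_cast (Nat.factorial_pos k).ne'
  have hk1 : ((k:ℝ)+1) ≠ 0 := by positivity
  rw [bco, bco]
  show (-1:ℝ)^k / (k.factorial * (k+0).factorial)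
      = ((k:ℝ)+1) * ((-1:ℝ)^k / (k.factorial * (k+1).factorial))
  have e : k+0 = k := rfl
  rw [e, h1]
  field_simp

lemma J0_hasDerivAt (t : ℝ) : HasDerivAt (besselJ 0) (-(besselJ 1 t)) t := by
  have h := besselJ_hasDerivAt 0 t
  have key : ∑' k, bterm' 0 k t = -(besselJ 1 t) := by
    calc ∑' k, bterm' 0 k t = bterm' 0 0 t + ∑' k, bterm' 0 (k+1) t :=
          Summable.tsum_eq_zero_add (summable_bterm' 0 t)
      _ = 0 + ∑' k, -(bterm 1 k t) := by
          congr 1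
          · simp [bterm']
          · apply tsum_congr
            intro k
            rw [bterm', bterm]
            have e : 2*(k+1)+0-1 = 2*k+1 := by omega
            rw [e]
            have h2 := bco_succ k
            push_cast
            linear_combination ((t/2)^(2*k+1)) * h2
      _ = -(besselJ 1 t) := by rw [tsum_neg, besselJ_eq, zero_add]
  rw [← key]; exact h

lemma J1_hasDerivAt (t : ℝ) (ht : t ≠ 0) :
    HasDerivAt (besselJ 1) (besselJ 0 t - besselJ 1 t / t) t := by
  have h := besselJ_hasDerivAt 1 t
  have key : ∑' k, bterm' 1 k t = besselJ 0 t - besselJ 1 t / t := by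
    rw [besselJ_eq, besselJ_eq, ← tsum_div_const,
      ← Summable.tsum_sub (summable_bterm 0 t) ((summable_bterm 1 t).div_const t)]
    apply tsum_congr
    intro k
    rw [bterm', bterm, bterm]
    have e : 2*k+1-1 = 2*k := by omega
    rw [e]
    have hpow : (t/2)^(2*k+1) = (t/2)^(2*k) * (t/2) := pow_succ _ _
    rw [hpow]
    have h2 := bco01 k
    rw [h2]
    field_simp
    ring
  rw [← key]; exact h

lemma besselJ_differentiable (ν : ℕ) : Differentiable ℝ (besselJ ν) :=
  fun t => (besselJ_hasDerivAt ν t).differentiableAt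

lemma besselJ_continuous (ν : ℕ) : Continuous (besselJ ν) :=
  (besselJ_differentiable ν).continuous

lemma besselJ0_zero : besselJ 0 0 = 1 := by
  rw [besselJ_eq]
  rw [tsum_eq_single 0 (fun k hk => ?_)]
  · simp [bterm, bco]
  · simp only [bterm]
    have h : (2*k+0) ≠ 0 := by omega
    rw [zero_div, zero_pow h, mul_zero]

lemma besselJ1_zero : besselJ 1 0 = 0 := by
  rw [besselJ_eq]
  have h : ∀ k, bterm 1 k 0 = 0 := fun k => by
    simp only [bterm]
    have h : 2*k+1 ≠ 0 := by omega
    rw [zero_div, zero_pow h, mul_zero]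
  simp [h]

lemma besselJ_sq_le {t : ℝ} (ht : 0 ≤ t) : (besselJ 0 t)^2 + (besselJ 1 t)^2 ≤ 1 := by
  set F : ℝ → ℝ := fun t => (besselJ 0 t)^2 + (besselJ 1 t)^2 with hF
  have hFd : ∀ x, DifferentiableAt ℝ F x := fun x =>
    (((besselJ_differentiable 0) x).pow 2).add (((besselJ_differentiable 1) x).pow 2)
  have hanti : AntitoneOn F (Set.Ici 0) := by
    apply antitoneOn_of_deriv_nonpos (convex_Ici 0)
    · exact (Differentiable.continuous (fun x => hFd x)).continuousOn
    · intro x hx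
      rw [interior_Ici] at hx
      exact (hFd x).differentiableWithinAt
    · intro x hx
      rw [interior_Ici] at hx
      have hx0 : (0:ℝ) < x := hx
      have hd : HasDerivAt F
          ((2:ℕ) * besselJ 0 x ^ (2-1) * (-(besselJ 1 x))
            + (2:ℕ) * besselJ 1 x ^ (2-1) * (besselJ 0 x - besselJ 1 x / x)) x :=
        (((J0_hasDerivAt x).pow 2)).add ((J1_hasDerivAt x hx0.ne').pow 2)
      rw [hd.deriv]
      have heq : ((2:ℕ):ℝ) * besselJ 0 x ^ (2-1) * (-(besselJ 1 x))
            + ((2:ℕ):ℝ) * besselJ 1 x ^ (2-1) * (besselJ 0 x - besselJ 1 x / x)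
          = -(2 * (besselJ 1 x)^2 / x) := by
        field_simp
        ring
      rw [heq]
      have : (0:ℝ) ≤ 2 * (besselJ 1 x)^2 / x := by positivity
      linarith
  have h1 := hanti Set.self_mem_Ici ht ht
  have hF0 : F 0 = 1 := by simp [hF, besselJ0_zero, besselJ1_zero]
  rw [hF0] at h1
  exact h1

lemma abs_besselJ0_le {t : ℝ} (ht : 0 ≤ t) : |besselJ 0 t| ≤ 1 := by
  have h := besselJ_sq_le ht
  rw [← sq_le_one_iff_abs_le_one]
  nlinarith [sq_nonneg (besselJ 1 t)]

lemma abs_besselJ1_le {t : ℝ} (ht : 0 ≤ t) : |besselJ 1 t| ≤ 1 := by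
  have h := besselJ_sq_le ht
  rw [← sq_le_one_iff_abs_le_one]
  nlinarith [sq_nonneg (besselJ 0 t)]

end BesselAux

namespace BesselAux

open Set MeasureTheory

noncomputable def K0 (n u : ℝ) : ℝ := besselJ 0 (4 * π * Real.sqrt (u * n))
noncomputable def K1 (n u : ℝ) : ℝ := Real.sqrt u * besselJ 1 (4 * π * Real.sqrt (u * n))

lemma K0_continuous (n : ℝ) : Continuous (K0 n) := by
  apply (besselJ_continuous 0).comp
  continuity

lemma K1_continuous (n : ℝ) : Continuous (K1 n) := by
  apply Real.continuous_sqrt.mul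
  apply (besselJ_continuous 1).comp
  continuity

lemma sqrt_arg_hasDerivAt {n u : ℝ} (hn : 0 < n) (hu : 0 < u) :
    HasDerivAt (fun v : ℝ => 4 * π * Real.sqrt (v * n))
      (4 * π * (1 / (2 * Real.sqrt (u * n)) * n)) u := by
  have h1 : HasDerivAt (fun v : ℝ => v * n) n u := hasDerivAt_mul_const n
  have h2 : HasDerivAt Real.sqrt (1 / (2 * Real.sqrt (u * n))) (u * n) :=
    Real.hasDerivAt_sqrt (mul_pos hu hn).ne'
  exact ((h2.comp u h1)).const_mul _

lemma K0_alg (p s r B uu nn : ℝ) (hs : s*s = uu) (hr : r*r = nn)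
    (hs0 : s ≠ 0) (hr0 : r ≠ 0) (hu0 : uu ≠ 0) :
    -(2*p*r) * ((s*B)/uu) = -B * (4*p*(1/(2*(s*r))*nn)) := by
  subst hs hr
  field_simp
  ring

lemma K1_alg (p s r A B nn : ℝ) (hr : r*r = nn)
    (hs0 : s ≠ 0) (hr0 : r ≠ 0) (hp0 : p ≠ 0) :
    2*p*r*A = 1/(2*s)*B + s*((A - B/(4*p*(s*r))) * (4*p*(1/(2*(s*r))*nn))) := by
  subst hr
  field_simp
  ring

lemma K0_hasDerivAt {n u : ℝ} (hn : 0 < n) (hu : 0 < u) :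
    HasDerivAt (K0 n) (-(2 * π * Real.sqrt n) * (K1 n u / u)) u := by
  have hsu : 0 < Real.sqrt u := Real.sqrt_pos.mpr hu
  have hsn : 0 < Real.sqrt n := Real.sqrt_pos.mpr hn
  have h := (J0_hasDerivAt (4 * π * Real.sqrt (u * n))).comp u (sqrt_arg_hasDerivAt hn hu)
  have hfun : K0 n = besselJ 0 ∘ fun v : ℝ => 4 * π * Real.sqrt (v * n) := rfl
  rw [hfun]
  refine h.congr_deriv ?_; symm
  rw [K1, Real.sqrt_mul hu.le]
  exact K0_alg π (Real.sqrt u) (Real.sqrt n)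
    (besselJ 1 (4 * π * (Real.sqrt u * Real.sqrt n))) u n
    (Real.mul_self_sqrt hu.le) (Real.mul_self_sqrt hn.le) hsu.ne' hsn.ne' hu.ne'

lemma K1_hasDerivAt {n u : ℝ} (hn : 0 < n) (hu : 0 < u) :
    HasDerivAt (K1 n) (2 * π * Real.sqrt n * K0 n u) u := by
  have hsu : 0 < Real.sqrt u := Real.sqrt_pos.mpr hu
  have hsn : 0 < Real.sqrt n := Real.sqrt_pos.mpr hn
  have hx : (0:ℝ) < 4 * π * Real.sqrt (u * n) := by
    have := Real.pi_pos
    have : (0:ℝ) < Real.sqrt (u * n) := Real.sqrt_pos.mpr (mul_pos hu hn)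
    positivity
  have h5 := (J1_hasDerivAt _ hx.ne').comp u (sqrt_arg_hasDerivAt hn hu)
  have h6 : HasDerivAt Real.sqrt (1 / (2 * Real.sqrt u)) u := Real.hasDerivAt_sqrt hu.ne'
  have h7 := h6.mul h5
  have hfun : K1 n = fun v : ℝ =>
      Real.sqrt v * (besselJ 1 ∘ fun w : ℝ => 4 * π * Real.sqrt (w * n)) v := rfl
  rw [hfun]
  refine h7.congr_deriv ?_; symm
  rw [K0]
  simp only [Function.comp_apply]
  rw [Real.sqrt_mul hu.le]
  exact K1_alg π (Real.sqrt u) (Real.sqrt n)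
    (besselJ 0 (4 * π * (Real.sqrt u * Real.sqrt n)))
    (besselJ 1 (4 * π * (Real.sqrt u * Real.sqrt n))) n
    (Real.mul_self_sqrt hn.le) hsu.ne' hsn.ne' Real.pi_ne_zero

/-- Smooth, compactly supported, support in the positive reals. -/
def Nice (g : ℝ → ℝ) : Prop :=
  ContDiff ℝ (⊤ : ℕ∞) g ∧ HasCompactSupport g ∧ Function.support g ⊆ Set.Ioi 0

lemma Nice.zero_le {g : ℝ → ℝ} (hg : Nice g) {x : ℝ} (hx : x ≤ 0) : g x = 0 := by
  by_contra h
  exact absurd (hg.2.2 h) (by simpa using hx)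

lemma Nice.deriv {g : ℝ → ℝ} (hg : Nice g) : Nice (_root_.deriv g) := by
  obtain ⟨hs, hc, hsupp⟩ := hg
  refine ⟨(contDiff_infty_iff_deriv.mp hs).2, hc.deriv, ?_⟩
  intro x hx
  by_contra hx0
  apply hx
  simp only [Set.mem_Ioi, not_lt] at hx0
  have hzero : ∀ y ∈ Set.Iic (0:ℝ), g y = 0 := fun y hy =>
    Nice.zero_le ⟨hs, hc, hsupp⟩ hy
  rcases lt_or_eq_of_le hx0 with h | h
  · have : g =ᶠ[nhds x] (fun _ => 0) := by
      filter_upwards [Iio_mem_nhds h] with y hy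
      exact hzero y (Set.mem_Iic.mpr (Set.mem_Iio.mp hy).le)
    rw [this.deriv_eq]
    simp
  · subst h
    apply HasDerivWithinAt.deriv_eq_zero ?_ (uniqueDiffOn_Iic 0 0 Set.self_mem_Iic)
    apply (hasDerivWithinAt_const (0:ℝ) _ (0:ℝ)).congr
    · exact fun y hy => hzero y hy
    · exact hzero 0 Set.self_mem_Iic

lemma Nice.id_mul {g : ℝ → ℝ} (hg : Nice g) : Nice (fun x => x * g x) := by
  obtain ⟨hs, hc, hsupp⟩ := hg
  refine ⟨(contDiff_id.mul hs), ?_, ?_⟩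
  · apply HasCompactSupport.intro hc.isCompact
    intro x hx
    rw [Function.notMem_support.mp fun hs' => hx (subset_tsupport g hs'), mul_zero]
  · intro x hx
    apply hsupp
    simp only [Function.mem_support] at hx ⊢
    exact fun h => hx (by rw [h, mul_zero])

lemma Nice.const_mul {g : ℝ → ℝ} (hg : Nice g) (c : ℝ) : Nice (fun x => c * g x) := by
  obtain ⟨hs, hc, hsupp⟩ := hg
  refine ⟨contDiff_const.mul hs, ?_, ?_⟩
  · apply HasCompactSupport.intro hc.isCompact
    intro x hx
    rw [Function.notMem_support.mp fun hs' => hx (subset_tsupport g hs'), mul_zero]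
  · intro x hx
    apply hsupp
    simp only [Function.mem_support] at hx ⊢
    exact fun h => hx (by rw [h, mul_zero])

lemma Nice.continuous {g : ℝ → ℝ} (hg : Nice g) : Continuous g :=
  hg.1.continuous

lemma Nice.integrable_mul {g : ℝ → ℝ} (hg : Nice g) {v : ℝ → ℝ} (hv : Continuous v) :
    IntegrableOn (fun x => g x * v x) (Set.Ioi 0) := by
  apply Integrable.integrableOn
  apply Continuous.integrable_of_hasCompactSupport (hg.continuous.mul hv)
  apply HasCompactSupport.intro hg.2.1.isCompact
  intro x hx
  rw [Pi.mul_apply, Function.notMem_support.mp fun hs' => hx (subset_tsupport g hs'), zero_mul]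

end BesselAux

namespace BesselAux

open Set MeasureTheory Filter

lemma integrable_mul' {g v : ℝ → ℝ} (hgc : Continuous g) (hgs : HasCompactSupport g)
    (hv : Continuous v) : IntegrableOn (fun x => g x * v x) (Set.Ioi 0) := by
  apply Integrable.integrableOn
  apply Continuous.integrable_of_hasCompactSupport (hgc.mul hv)
  apply HasCompactSupport.intro hgs.isCompact
  intro x hx
  rw [Pi.mul_apply, Function.notMem_support.mp fun hs' => hx (subset_tsupport g hs'), zero_mul]

lemma Nice.eventually_zero_atTop {g : ℝ → ℝ} (hg : Nice g) :
    ∀ᶠ x in Filter.atTop, g x = 0 := by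
  obtain ⟨M, hM⟩ := hg.2.1.isCompact.bddAbove
  filter_upwards [Filter.eventually_gt_atTop M] with x hx
  exact image_eq_zero_of_notMem_tsupport fun hmem => absurd (hM hmem) (not_le.mpr hx)

lemma tendsto_mul_atTop {g v : ℝ → ℝ} (hg : Nice g) :
    Tendsto (fun x => g x * v x) atTop (nhds 0) := by
  apply Tendsto.congr' _ tendsto_const_nhds
  filter_upwards [hg.eventually_zero_atTop] with x hx
  rw [hx, zero_mul]

lemma tendsto_mul_zero {g v : ℝ → ℝ} (hg : Nice g) (hv : Continuous v) :
    Tendsto (fun x => g x * v x) (nhdsWithin 0 (Set.Ioi 0)) (nhds 0) := by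
  have h : Tendsto (fun x => g x * v x) (nhdsWithin 0 (Set.Ioi 0)) (nhds (g 0 * v 0)) :=
    ((hg.continuous.mul hv).tendsto 0).mono_left nhdsWithin_le_nhds
  simpa [hg.zero_le le_rfl] using h

lemma const_mul_integral (f : ℝ → ℝ) (c : ℝ) :
    ∫ x in Set.Ioi (0:ℝ), c * f x = c * ∫ x in Set.Ioi (0:ℝ), f x :=
  MeasureTheory.integral_const_mul c f

lemma step01 {g : ℝ → ℝ} (hg : Nice g) {n : ℝ} (hn : 0 < n) :
    ∫ u in Set.Ioi (0:ℝ), g u * K0 n u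
      = (Real.sqrt n)⁻¹ *
        ∫ u in Set.Ioi (0:ℝ), (-(2*π)⁻¹ * _root_.deriv g u) * K1 n u := by
  have hsn : 0 < Real.sqrt n := Real.sqrt_pos.mpr hn
  have hπ := Real.pi_pos
  have hgd : ∀ x ∈ Set.Ioi (0:ℝ), HasDerivAt g (_root_.deriv g x) x := fun x _ =>
    ((hg.1.differentiable (by simp)) x).hasDerivAt
  have hv : ∀ x ∈ Set.Ioi (0:ℝ), HasDerivAt (K1 n) ((fun x => 2*π*Real.sqrt n * K0 n x) x) x :=
    fun x hx => K1_hasDerivAt hn hx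
  have hIBP := integral_Ioi_mul_deriv_eq_deriv_mul hgd hv
    (hg.integrable_mul (continuous_const.mul (K0_continuous n)))
    (hg.deriv.integrable_mul (K1_continuous n))
    (tendsto_mul_zero hg (K1_continuous n))
    (tendsto_mul_atTop hg)
  have e1 : ∫ x in Set.Ioi (0:ℝ), g x * (2*π*Real.sqrt n * K0 n x)
      = (2*π*Real.sqrt n) * ∫ x in Set.Ioi (0:ℝ), g x * K0 n x := by
    rw [← const_mul_integral]
    exact setIntegral_congr_fun measurableSet_Ioi fun x _ => by ring
  have e2 : ∫ x in Set.Ioi (0:ℝ), (-(2*π)⁻¹ * _root_.deriv g x) * K1 n x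
      = (-(2*π)⁻¹) * ∫ x in Set.Ioi (0:ℝ), _root_.deriv g x * K1 n x := by
    rw [← const_mul_integral]
    exact setIntegral_congr_fun measurableSet_Ioi fun x _ => by ring
  rw [e1] at hIBP
  rw [e2]
  have hne : (2*π*Real.sqrt n) ≠ 0 := by positivity
  field_simp at hIBP ⊢
  linear_combination hIBP

lemma step10 {g : ℝ → ℝ} (hg : Nice g) {n : ℝ} (hn : 0 < n) :
    ∫ u in Set.Ioi (0:ℝ), g u * K1 n u
      = (Real.sqrt n)⁻¹ *
        ∫ u in Set.Ioi (0:ℝ), ((2*π)⁻¹ * _root_.deriv (fun x => x * g x) u) * K0 n u := by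
  have hsn : 0 < Real.sqrt n := Real.sqrt_pos.mpr hn
  have hπ := Real.pi_pos
  have hG : Nice (fun x => x * g x) := hg.id_mul
  have hGd : ∀ x ∈ Set.Ioi (0:ℝ), HasDerivAt (fun x => x * g x)
      (_root_.deriv (fun x => x * g x) x) x := fun x _ =>
    ((hG.1.differentiable (by simp)) x).hasDerivAt
  have hv : ∀ x ∈ Set.Ioi (0:ℝ), HasDerivAt (K0 n)
      ((fun x => -(2*π*Real.sqrt n) * (K1 n x / x)) x) x :=
    fun x hx => K0_hasDerivAt hn hx
  have hint : IntegrableOn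
      (fun x => (x * g x) * (-(2*π*Real.sqrt n) * (K1 n x / x))) (Set.Ioi 0) := by
    apply IntegrableOn.congr_fun
      ((hg.integrable_mul (K1_continuous n)).const_mul (-(2*π*Real.sqrt n)))
      _ measurableSet_Ioi
    intro x hx
    have hx0 : x ≠ 0 := (Set.mem_Ioi.mp hx).ne'
    field_simp
  have hIBP := integral_Ioi_mul_deriv_eq_deriv_mul hGd hv hint
    (hG.deriv.integrable_mul (K0_continuous n))
    (tendsto_mul_zero hG (K0_continuous n))
    (tendsto_mul_atTop hG)
  have e1 : ∫ x in Set.Ioi (0:ℝ), (x * g x) * (-(2*π*Real.sqrt n) * (K1 n x / x))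
      = (-(2*π*Real.sqrt n)) * ∫ x in Set.Ioi (0:ℝ), g x * K1 n x := by
    rw [← const_mul_integral]
    apply setIntegral_congr_fun measurableSet_Ioi
    intro x hx
    have hx0 : x ≠ 0 := (Set.mem_Ioi.mp hx).ne'
    field_simp
  have e2 : ∫ x in Set.Ioi (0:ℝ), ((2*π)⁻¹ * _root_.deriv (fun x => x * g x) x) * K0 n x
      = (2*π)⁻¹ * ∫ x in Set.Ioi (0:ℝ), _root_.deriv (fun x => x * g x) x * K0 n x := by
    rw [← const_mul_integral]
    exact setIntegral_congr_fun measurableSet_Ioi fun x _ => by ring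
  rw [e1] at hIBP
  rw [e2]
  field_simp at hIBP ⊢
  linear_combination -hIBP

lemma key {g : ℝ → ℝ} (hg : Nice g) (m : ℕ) :
    ∃ h : ℝ → ℝ, Nice h ∧ ∀ n : ℝ, 0 < n →
      ∫ u in Set.Ioi (0:ℝ), g u * K1 n u
        = ((Real.sqrt n)⁻¹)^m *
          ∫ u in Set.Ioi (0:ℝ), h u * (if m % 2 = 0 then K1 n else K0 n) u := by
  induction m with
  | zero => exact ⟨g, hg, fun n hn => by simp⟩
  | succ m ih =>
    obtain ⟨h, hh, hI⟩ := ih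
    by_cases hpar : m % 2 = 0
    · refine ⟨fun x => (2*π)⁻¹ * _root_.deriv (fun y => y * h y) x, (hh.id_mul).deriv.const_mul _,
        fun n hn => ?_⟩
      have hstep := step10 hh hn
      rw [hI n hn, show m % 2 = 0 from hpar, if_pos rfl, hstep,
        show (m+1) % 2 = 1 by omega, if_neg one_ne_zero, pow_succ]
      ring
    · refine ⟨fun x => -(2*π)⁻¹ * _root_.deriv h x, (hh.deriv).const_mul _, fun n hn => ?_⟩
      have hstep := step01 hh hn
      rw [hI n hn, if_neg hpar, hstep,
        show (m+1) % 2 = 0 by omega, if_pos rfl, pow_succ]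
      ring

end BesselAux

namespace BesselAux

open Set MeasureTheory Filter

lemma kernel_bound {n : ℝ} (hn : 0 < n) {K : ℝ → ℝ} (hK : K = K0 n ∨ K = K1 n) :
    Continuous K ∧ ∀ u ∈ Set.Ioi (0:ℝ), |K u| ≤ 1 + Real.sqrt u := by
  have hπ := Real.pi_pos
  rcases hK with rfl | rfl
  · refine ⟨K0_continuous n, fun u hu => ?_⟩
    have harg : 0 ≤ 4 * π * Real.sqrt (u * n) := by positivity
    have := abs_besselJ0_le harg
    have hsq : 0 ≤ Real.sqrt u := Real.sqrt_nonneg u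
    calc |K0 n u| ≤ 1 := this
      _ ≤ 1 + Real.sqrt u := by linarith
  · refine ⟨K1_continuous n, fun u hu => ?_⟩
    have harg : 0 ≤ 4 * π * Real.sqrt (u * n) := by positivity
    have h1 := abs_besselJ1_le harg
    have hsq : 0 ≤ Real.sqrt u := Real.sqrt_nonneg u
    calc |K1 n u| = Real.sqrt u * |besselJ 1 (4 * π * Real.sqrt (u * n))| := by
          rw [K1, abs_mul, abs_of_nonneg hsq]
      _ ≤ Real.sqrt u * 1 := mul_le_mul_of_nonneg_left h1 hsq
      _ ≤ 1 + Real.sqrt u := by linarith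

lemma integral_bound {h : ℝ → ℝ} (hh : Nice h) {n : ℝ} (hn : 0 < n) {K : ℝ → ℝ}
    (hK : K = K0 n ∨ K = K1 n) :
    |∫ u in Set.Ioi (0:ℝ), h u * K u| ≤ ∫ u in Set.Ioi (0:ℝ), |h u| * (1 + Real.sqrt u) := by
  obtain ⟨hKc, hKb⟩ := kernel_bound hn hK
  have hint1 : IntegrableOn (fun u => h u * K u) (Set.Ioi 0) := hh.integrable_mul hKc
  have hint2 : IntegrableOn (fun u => |h u| * (1 + Real.sqrt u)) (Set.Ioi 0) :=
    integrable_mul' hh.continuous.abs (hh.2.1.comp_left abs_zero)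
      (continuous_const.add Real.continuous_sqrt)
  calc |∫ u in Set.Ioi (0:ℝ), h u * K u| ≤ ∫ u in Set.Ioi (0:ℝ), |h u * K u| := by
        rw [← Real.norm_eq_abs]
        exact (norm_integral_le_integral_norm _).trans_eq (by simp only [Real.norm_eq_abs])
    _ ≤ ∫ u in Set.Ioi (0:ℝ), |h u| * (1 + Real.sqrt u) := by
        apply setIntegral_mono_on hint1.abs hint2 measurableSet_Ioi
        intro u hu
        rw [abs_mul]
        exact mul_le_mul_of_nonneg_left (hKb u hu) (abs_nonneg _)

end BesselAux

/-- For `W` smooth and compactly supported in `(0,∞)` and `m ≥ 1`, the integral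
`∫₀^∞ W(u) · 2π√u · J₁(4π√(un)) du` is `O_{m,W}(n^{-m/2})`. -/
theorem stmt0 (W : ℝ → ℝ) (hW : ContDiff ℝ (⊤ : ℕ∞) W) (hc : HasCompactSupport W)
    (hsupp : Function.support W ⊆ Set.Ioi 0) (m : ℕ) (hm : 1 ≤ m) :
    ∃ C : ℝ, ∀ n : ℝ, 0 < n →
      |∫ u in Set.Ioi (0 : ℝ),
          W u * (2 * π * Real.sqrt u * besselJ 1 (4 * π * Real.sqrt (u * n)))| ≤
        C * n ^ (-(m : ℝ) / 2) := by
  classical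
  have hW' : ContDiff ℝ (⊤:ℕ∞) W := hW.of_le (by simp)
  have hgW : BesselAux.Nice W := ⟨hW', hc, hsupp⟩
  have hg : BesselAux.Nice (fun u => 2*π*W u) := hgW.const_mul (2*π)
  obtain ⟨h, hh, hI⟩ := BesselAux.key hg m
  refine ⟨∫ u in Set.Ioi (0:ℝ), |h u| * (1 + Real.sqrt u), fun n hn => ?_⟩
  have hsn : 0 < Real.sqrt n := Real.sqrt_pos.mpr hn
  have hrw : (fun u => W u * (2 * π * Real.sqrt u * besselJ 1 (4 * π * Real.sqrt (u * n))))
      = fun u => (fun u => 2*π*W u) u * BesselAux.K1 n u := by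
    funext u
    simp only [BesselAux.K1]
    ring
  rw [hrw, hI n hn]
  have hpow : (0:ℝ) ≤ (Real.sqrt n)⁻¹ ^ m := by positivity
  rw [abs_mul, abs_of_nonneg hpow]
  have hKor : (if m % 2 = 0 then BesselAux.K1 n else BesselAux.K0 n) = BesselAux.K0 n
      ∨ (if m % 2 = 0 then BesselAux.K1 n else BesselAux.K0 n) = BesselAux.K1 n := by
    by_cases hp : m % 2 = 0
    · right; rw [if_pos hp]
    · left; rw [if_neg hp]
  have hbound := BesselAux.integral_bound hh hn hKor
  have e : (Real.sqrt n)⁻¹ ^ m = n ^ (-(m:ℝ)/2) := by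
    have e1 : (Real.sqrt n)⁻¹ = n ^ (-(1/2:ℝ)) := by
      rw [Real.sqrt_eq_rpow, ← Real.rpow_neg hn.le]
    rw [e1, ← Real.rpow_natCast (n ^ (-(1/2:ℝ))) m, ← Real.rpow_mul hn.le]
    congr 1
    push_cast
    ring
  rw [e]
  exact (mul_le_mul_of_nonneg_left hbound
    (by positivity : (0:ℝ) ≤ n ^ (-(m:ℝ)/2))).trans_eq (mul_comm _ _)
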